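/- For the energy harvesting two-way channel with infinite batteries and α_1, α_2 ∈ [0,1]: the supremum of the sum-throughput Σ_{i=1}^{N} [ (1/2)·log(1 + h_1 p_{1,i}/σ_2²) + (1/2)·log(1 + h_2 p_{2,i}/σ_1²) ] over all feasible policies equals its supremum over all feasible procrastinating policies. Consequently, if an optimal policy exists, then an optimal procrastinating policy exists. -/
import Mathlib


/-- Sum-throughputs achievable by feasible policies of the energy harvesting
two-way channel with infinite batteries. -/
def twcFeasThroughputs (N : ℕ) (E1 E2 : ℕ → ℝ) (h1 h2 s1 s2 a1 a2 : ℝ) : Set ℝ :=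
  {t : ℝ | ∃ p1 p2 d1 d2 : ℕ → ℝ,
    (∀ i < N, 0 ≤ p1 i ∧ 0 ≤ p2 i ∧ 0 ≤ d1 i ∧ 0 ≤ d2 i) ∧
    (∀ i < N,
      0 ≤ ∑ n ∈ Finset.range (i+1), (E1 n - p1 n + a2 * d2 n - d1 n) ∧
      0 ≤ ∑ n ∈ Finset.range (i+1), (E2 n - p2 n + a1 * d1 n - d2 n)) ∧
    t = ∑ i ∈ Finset.range N,
      (1/2 * Real.log (1 + h1 * p1 i / s2) + 1/2 * Real.log (1 + h2 * p2 i / s1))}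

/-- Sum-throughputs achievable by feasible procrastinating policies. -/
def twcProcThroughputs (N : ℕ) (E1 E2 : ℕ → ℝ) (h1 h2 s1 s2 a1 a2 : ℝ) : Set ℝ :=
  {t : ℝ | ∃ p1 p2 d1 d2 : ℕ → ℝ,
    (∀ i < N, 0 ≤ p1 i ∧ 0 ≤ p2 i ∧ 0 ≤ d1 i ∧ 0 ≤ d2 i) ∧
    (∀ i < N,
      0 ≤ ∑ n ∈ Finset.range (i+1), (E1 n - p1 n + a2 * d2 n - d1 n) ∧
      0 ≤ ∑ n ∈ Finset.range (i+1), (E2 n - p2 n + a1 * d1 n - d2 n)) ∧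
    (∀ i < N, 0 ≤ p1 i - a2 * d2 i ∧ 0 ≤ p2 i - a1 * d1 i) ∧
    t = ∑ i ∈ Finset.range N,
      (1/2 * Real.log (1 + h1 * p1 i / s2) + 1/2 * Real.log (1 + h2 * p2 i / s1))}

/-- One step of the transfer-deferral construction. -/
noncomputable def twcStep (e1 e2 q1 q2 c1 c2 b1 b2 a1 a2 s1 s2 : ℝ) : ℝ × ℝ :=
  if 0 < q1 - e1 - (b1 + s1 - a2 * s2) then
    (s1 + c1, s2 + c2 - (q1 - e1 - (b1 + s1 - a2 * s2)) / a2)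
  else if 0 < q2 - e2 - (b2 + s2 - a1 * s1) then
    (s1 + c1 - (q2 - e2 - (b2 + s2 - a1 * s1)) / a1, s2 + c2)
  else (s1 + c1, s2 + c2)

set_option maxHeartbeats 1000000 in
lemma twcStep_spec (e1 e2 q1 q2 c1 c2 b1 b2 a1 a2 s1 s2 : ℝ)
    (he1 : 0 ≤ e1) (he2 : 0 ≤ e2) (hq1 : 0 ≤ q1) (hq2 : 0 ≤ q2)
    (hc1 : 0 ≤ c1) (hc2 : 0 ≤ c2) (ha1 : 0 ≤ a1) (ha2 : 0 ≤ a2) (ha12 : a1 * a2 ≤ 1)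
    (hs1 : 0 ≤ s1) (hs2 : 0 ≤ s2)
    (hb1s : 0 ≤ b1 + s1 - a2 * s2) (hb2s : 0 ≤ b2 + s2 - a1 * s1)
    (hB1 : 0 ≤ b1 + (e1 - q1 + a2 * c2 - c1))
    (hB2 : 0 ≤ b2 + (e2 - q2 + a1 * c1 - c2)) :
    0 ≤ (twcStep e1 e2 q1 q2 c1 c2 b1 b2 a1 a2 s1 s2).1 ∧
    0 ≤ (twcStep e1 e2 q1 q2 c1 c2 b1 b2 a1 a2 s1 s2).2 ∧
    0 ≤ (b1 + (e1 - q1 + a2 * c2 - c1)) + (twcStep e1 e2 q1 q2 c1 c2 b1 b2 a1 a2 s1 s2).1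
        - a2 * (twcStep e1 e2 q1 q2 c1 c2 b1 b2 a1 a2 s1 s2).2 ∧
    0 ≤ (b2 + (e2 - q2 + a1 * c1 - c2)) + (twcStep e1 e2 q1 q2 c1 c2 b1 b2 a1 a2 s1 s2).2
        - a1 * (twcStep e1 e2 q1 q2 c1 c2 b1 b2 a1 a2 s1 s2).1 ∧
    0 ≤ s1 + c1 - (twcStep e1 e2 q1 q2 c1 c2 b1 b2 a1 a2 s1 s2).1 ∧
    0 ≤ s2 + c2 - (twcStep e1 e2 q1 q2 c1 c2 b1 b2 a1 a2 s1 s2).2 ∧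
    a2 * (s2 + c2 - (twcStep e1 e2 q1 q2 c1 c2 b1 b2 a1 a2 s1 s2).2) ≤ q1 ∧
    a1 * (s1 + c1 - (twcStep e1 e2 q1 q2 c1 c2 b1 b2 a1 a2 s1 s2).1) ≤ q2 := by
  unfold twcStep
  split_ifs with hx1 hx2
  · -- node 1 needs energy
    set X1 := q1 - e1 - (b1 + s1 - a2 * s2) with hX1def
    dsimp only
    have avail : X1 + s1 + c1 ≤ a2 * (s2 + c2) := by nlinarith [hB1]
    have ha2pos : 0 < a2 := by
      rcases eq_or_lt_of_le ha2 with h | h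
      · exfalso; nlinarith [avail]
      · exact h
    have hdiv : a2 * (X1 / a2) = X1 := by field_simp
    have hdivle : X1 / a2 ≤ s2 + c2 := by
      rw [div_le_iff₀ ha2pos]; nlinarith [avail]
    have hdivnn : 0 ≤ X1 / a2 := div_nonneg hx1.le ha2pos.le
    have hprod : 0 ≤ (1 - a1 * a2) * (s1 + c1) :=
      mul_nonneg (by nlinarith) (by linarith)
    have key : 0 ≤ a2 * ((b2 + (e2 - q2 + a1 * c1 - c2)) + (s2 + c2 - X1 / a2)
        - a1 * (s1 + c1)) := by
      have h1 : 0 ≤ a2 * (b2 + (e2 - q2 + a1 * c1 - c2)) := mul_nonneg ha2 hB2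
      nlinarith [hdiv, avail, h1, hprod]
    have hb2new : 0 ≤ (b2 + (e2 - q2 + a1 * c1 - c2)) + (s2 + c2 - X1 / a2)
        - a1 * (s1 + c1) := by
      by_contra hneg
      push_neg at hneg
      nlinarith [mul_neg_of_pos_of_neg ha2pos hneg]
    refine ⟨by linarith, by linarith, by nlinarith [hdiv], by nlinarith [hb2new],
      by linarith, by linarith, by nlinarith [hdiv, hb1s], by nlinarith⟩
  · -- node 2 needs energy
    set X2 := q2 - e2 - (b2 + s2 - a1 * s1) with hX2def
    dsimp only
    have avail : X2 + s2 + c2 ≤ a1 * (s1 + c1) := by nlinarith [hB2]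
    have ha1pos : 0 < a1 := by
      rcases eq_or_lt_of_le ha1 with h | h
      · exfalso; nlinarith [avail]
      · exact h
    have hdiv : a1 * (X2 / a1) = X2 := by field_simp
    have hdivle : X2 / a1 ≤ s1 + c1 := by
      rw [div_le_iff₀ ha1pos]; nlinarith [avail]
    have hdivnn : 0 ≤ X2 / a1 := div_nonneg hx2.le ha1pos.le
    have hprod : 0 ≤ (1 - a1 * a2) * (s2 + c2) :=
      mul_nonneg (by nlinarith) (by linarith)
    have key : 0 ≤ a1 * ((b1 + (e1 - q1 + a2 * c2 - c1)) + (s1 + c1 - X2 / a1)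
        - a2 * (s2 + c2)) := by
      have h1 : 0 ≤ a1 * (b1 + (e1 - q1 + a2 * c2 - c1)) := mul_nonneg ha1 hB1
      nlinarith [hdiv, avail, h1, hprod]
    have hb1new : 0 ≤ (b1 + (e1 - q1 + a2 * c2 - c1)) + (s1 + c1 - X2 / a1)
        - a2 * (s2 + c2) := by
      by_contra hneg
      push_neg at hneg
      nlinarith [mul_neg_of_pos_of_neg ha1pos hneg]
    refine ⟨by linarith, by linarith, by nlinarith [hb1new], by nlinarith [hdiv],
      by linarith, by linarith, by nlinarith, by nlinarith [hdiv, hb2s]⟩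
  · -- nobody needs energy
    dsimp only
    push_neg at hx1 hx2
    exact ⟨by linarith, by linarith, by nlinarith, by nlinarith,
      by linarith, by linarith, by nlinarith, by nlinarith⟩

/-- The reserve-state recursion: `(twcSig ... i)` is the pair of amounts of
transfer that nodes 1 and 2 have deferred (withheld) up to slot `i`. -/
noncomputable def twcSig (E1 E2 p1 p2 d1 d2 : ℕ → ℝ) (a1 a2 : ℝ) : ℕ → ℝ × ℝ
  | 0 => (0, 0)
  | i + 1 =>
      twcStep (E1 i) (E2 i) (p1 i) (p2 i) (d1 i) (d2 i)
        (∑ n ∈ Finset.range i, (E1 n - p1 n + a2 * d2 n - d1 n))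
        (∑ n ∈ Finset.range i, (E2 n - p2 n + a1 * d1 n - d2 n))
        a1 a2 (twcSig E1 E2 p1 p2 d1 d2 a1 a2 i).1 (twcSig E1 E2 p1 p2 d1 d2 a1 a2 i).2

lemma twc_main (N : ℕ) (E1 E2 p1 p2 d1 d2 : ℕ → ℝ) (a1 a2 : ℝ)
    (ha1 : 0 ≤ a1) (ha1' : a1 ≤ 1) (ha2 : 0 ≤ a2) (ha2' : a2 ≤ 1)
    (hE : ∀ i < N, 0 ≤ E1 i ∧ 0 ≤ E2 i)
    (hnn : ∀ i < N, 0 ≤ p1 i ∧ 0 ≤ p2 i ∧ 0 ≤ d1 i ∧ 0 ≤ d2 i)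
    (hfeas : ∀ i < N,
      0 ≤ ∑ n ∈ Finset.range (i+1), (E1 n - p1 n + a2 * d2 n - d1 n) ∧
      0 ≤ ∑ n ∈ Finset.range (i+1), (E2 n - p2 n + a1 * d1 n - d2 n)) :
    ∃ d1' d2' : ℕ → ℝ,
      (∀ i < N, 0 ≤ d1' i ∧ 0 ≤ d2' i) ∧
      (∀ i < N,
        0 ≤ ∑ n ∈ Finset.range (i+1), (E1 n - p1 n + a2 * d2' n - d1' n) ∧
        0 ≤ ∑ n ∈ Finset.range (i+1), (E2 n - p2 n + a1 * d1' n - d2' n)) ∧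
      (∀ i < N, a2 * d2' i ≤ p1 i ∧ a1 * d1' i ≤ p2 i) := by
  set S := twcSig E1 E2 p1 p2 d1 d2 a1 a2 with hS
  have ha12 : a1 * a2 ≤ 1 := by nlinarith
  -- the invariant
  have inv : ∀ i, i ≤ N →
      0 ≤ (S i).1 ∧ 0 ≤ (S i).2 ∧
      0 ≤ (∑ n ∈ Finset.range i, (E1 n - p1 n + a2 * d2 n - d1 n)) + (S i).1 - a2 * (S i).2 ∧
      0 ≤ (∑ n ∈ Finset.range i, (E2 n - p2 n + a1 * d1 n - d2 n)) + (S i).2 - a1 * (S i).1 := by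
    intro i
    induction i with
    | zero => intro _; simp [hS, twcSig]
    | succ i ih =>
      intro hiN
      have hi : i < N := hiN
      obtain ⟨h1, h2, h3, h4⟩ := ih (le_of_lt hi)
      obtain ⟨hp1, hp2, hd1, hd2⟩ := hnn i hi
      obtain ⟨hE1, hE2⟩ := hE i hi
      obtain ⟨hf1, hf2⟩ := hfeas i hi
      rw [Finset.sum_range_succ] at hf1 hf2
      have hstep := twcStep_spec (E1 i) (E2 i) (p1 i) (p2 i) (d1 i) (d2 i)
        (∑ n ∈ Finset.range i, (E1 n - p1 n + a2 * d2 n - d1 n))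
        (∑ n ∈ Finset.range i, (E2 n - p2 n + a1 * d1 n - d2 n))
        a1 a2 (S i).1 (S i).2
        hE1 hE2 hp1 hp2 hd1 hd2 ha1 ha2 ha12 h1 h2 h3 h4
        (by linarith) (by linarith)
      have hSsucc : S (i+1) = twcStep (E1 i) (E2 i) (p1 i) (p2 i) (d1 i) (d2 i)
        (∑ n ∈ Finset.range i, (E1 n - p1 n + a2 * d2 n - d1 n))
        (∑ n ∈ Finset.range i, (E2 n - p2 n + a1 * d1 n - d2 n))
        a1 a2 (S i).1 (S i).2 := rfl
      rw [hSsucc]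
      obtain ⟨g1, g2, g3, g4, g5, g6, g7, g8⟩ := hstep
      refine ⟨g1, g2, ?_, ?_⟩
      · rw [Finset.sum_range_succ]; linarith
      · rw [Finset.sum_range_succ]; linarith
  -- the per-slot facts
  have slot : ∀ i < N,
      0 ≤ (S i).1 + d1 i - (S (i+1)).1 ∧
      0 ≤ (S i).2 + d2 i - (S (i+1)).2 ∧
      a2 * ((S i).2 + d2 i - (S (i+1)).2) ≤ p1 i ∧
      a1 * ((S i).1 + d1 i - (S (i+1)).1) ≤ p2 i := by
    intro i hi
    obtain ⟨h1, h2, h3, h4⟩ := inv i (le_of_lt hi)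
    obtain ⟨hp1, hp2, hd1, hd2⟩ := hnn i hi
    obtain ⟨hE1, hE2⟩ := hE i hi
    obtain ⟨hf1, hf2⟩ := hfeas i hi
    rw [Finset.sum_range_succ] at hf1 hf2
    have hstep := twcStep_spec (E1 i) (E2 i) (p1 i) (p2 i) (d1 i) (d2 i)
      (∑ n ∈ Finset.range i, (E1 n - p1 n + a2 * d2 n - d1 n))
      (∑ n ∈ Finset.range i, (E2 n - p2 n + a1 * d1 n - d2 n))
      a1 a2 (S i).1 (S i).2
      hE1 hE2 hp1 hp2 hd1 hd2 ha1 ha2 ha12 h1 h2 h3 h4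
      (by linarith) (by linarith)
    have hSsucc : S (i+1) = twcStep (E1 i) (E2 i) (p1 i) (p2 i) (d1 i) (d2 i)
      (∑ n ∈ Finset.range i, (E1 n - p1 n + a2 * d2 n - d1 n))
      (∑ n ∈ Finset.range i, (E2 n - p2 n + a1 * d1 n - d2 n))
      a1 a2 (S i).1 (S i).2 := rfl
    rw [hSsucc]
    obtain ⟨g1, g2, g3, g4, g5, g6, g7, g8⟩ := hstep
    exact ⟨g5, g6, g7, g8⟩
  refine ⟨fun i => (S i).1 + d1 i - (S (i+1)).1,
          fun i => (S i).2 + d2 i - (S (i+1)).2, ?_, ?_, ?_⟩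
  · intro i hi; exact ⟨(slot i hi).1, (slot i hi).2.1⟩
  · -- cumulative feasibility via telescoping
    have tel1 : ∀ i, ∑ n ∈ Finset.range i,
        (E1 n - p1 n + a2 * ((S n).2 + d2 n - (S (n+1)).2) - ((S n).1 + d1 n - (S (n+1)).1))
        = (∑ n ∈ Finset.range i, (E1 n - p1 n + a2 * d2 n - d1 n)) + (S i).1 - a2 * (S i).2 := by
      intro i
      induction i with
      | zero => simp [hS, twcSig]
      | succ i ih =>
        rw [Finset.sum_range_succ, Finset.sum_range_succ (f := fun n => E1 n - p1 n + a2 * d2 n - d1 n), ih]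
        ring
    have tel2 : ∀ i, ∑ n ∈ Finset.range i,
        (E2 n - p2 n + a1 * ((S n).1 + d1 n - (S (n+1)).1) - ((S n).2 + d2 n - (S (n+1)).2))
        = (∑ n ∈ Finset.range i, (E2 n - p2 n + a1 * d1 n - d2 n)) + (S i).2 - a1 * (S i).1 := by
      intro i
      induction i with
      | zero => simp [hS, twcSig]
      | succ i ih =>
        rw [Finset.sum_range_succ, Finset.sum_range_succ (f := fun n => E2 n - p2 n + a1 * d1 n - d2 n), ih]
        ring
    intro i hi
    obtain ⟨k1, k2, k3, k4⟩ := inv (i+1) (by omega)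
    constructor
    · rw [tel1 (i+1)]; linarith
    · rw [tel2 (i+1)]; linarith
  · intro i hi
    exact ⟨(slot i hi).2.2.1, (slot i hi).2.2.2⟩

lemma twc_sets_eq (N : ℕ) (E1 E2 : ℕ → ℝ) (h1 h2 s1 s2 a1 a2 : ℝ)
    (ha1 : a1 ∈ Set.Icc (0:ℝ) 1) (ha2 : a2 ∈ Set.Icc (0:ℝ) 1)
    (hE : ∀ i < N, 0 ≤ E1 i ∧ 0 ≤ E2 i) :
    twcFeasThroughputs N E1 E2 h1 h2 s1 s2 a1 a2
      = twcProcThroughputs N E1 E2 h1 h2 s1 s2 a1 a2 := by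
  apply Set.Subset.antisymm
  · rintro t ⟨p1, p2, d1, d2, hnn, hfeas, ht⟩
    obtain ⟨d1', d2', hnn', hfeas', hproc'⟩ :=
      twc_main N E1 E2 p1 p2 d1 d2 a1 a2 ha1.1 ha1.2 ha2.1 ha2.2 hE hnn hfeas
    refine ⟨p1, p2, d1', d2', ?_, hfeas', ?_, ht⟩
    · intro i hi
      exact ⟨(hnn i hi).1, (hnn i hi).2.1, (hnn' i hi).1, (hnn' i hi).2⟩
    · intro i hi
      exact ⟨by linarith [(hproc' i hi).1], by linarith [(hproc' i hi).2]⟩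
  · rintro t ⟨p1, p2, d1, d2, hnn, hfeas, _, ht⟩
    exact ⟨p1, p2, d1, d2, hnn, hfeas, ht⟩

/-- The optimal sum-throughput over feasible policies equals that
over feasible procrastinating policies; consequently if an optimal policy
exists, an optimal procrastinating policy exists. -/
theorem stmt_2
    (N : ℕ) (E1 E2 : ℕ → ℝ) (h1 h2 s1 s2 a1 a2 : ℝ)
    (hh1 : 0 < h1) (hh2 : 0 < h2) (hs1 : 0 < s1) (hs2 : 0 < s2)
    (ha1 : a1 ∈ Set.Icc (0:ℝ) 1) (ha2 : a2 ∈ Set.Icc (0:ℝ) 1)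
    (hE : ∀ i < N, 0 ≤ E1 i ∧ 0 ≤ E2 i) :
    sSup (twcFeasThroughputs N E1 E2 h1 h2 s1 s2 a1 a2)
      = sSup (twcProcThroughputs N E1 E2 h1 h2 s1 s2 a1 a2) ∧
    ((∃ t ∈ twcFeasThroughputs N E1 E2 h1 h2 s1 s2 a1 a2,
        ∀ t' ∈ twcFeasThroughputs N E1 E2 h1 h2 s1 s2 a1 a2, t' ≤ t) →
      ∃ t ∈ twcProcThroughputs N E1 E2 h1 h2 s1 s2 a1 a2,
        ∀ t' ∈ twcFeasThroughputs N E1 E2 h1 h2 s1 s2 a1 a2, t' ≤ t) := by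
  have hset := twc_sets_eq N E1 E2 h1 h2 s1 s2 a1 a2 ha1 ha2 hE
  rw [hset]
  exact ⟨rfl, fun h => h⟩
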